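/- Let p be an odd prime, set n = (p−1)/2, and let r, s ≥ 1 be integers. Then \overline{H}_n(r,s) ≡ (1/(−2)^{r+s}) · ( H_n(s,r) + (p/2)·( r·H_n(s,r+1) + s·H_n(s+1,r) ) + (p²/4)·( binom(r+1,2)·H_n(s,r+2) + r·s·H_n(s+1,r+1) + binom(s+1,2)·H_n(s+2,r) ) ) (mod p³). -/

import Mathlib

/-- `x ≡ y (mod p^m)` for rationals: the `p`-adic valuation of `x - y` is at least `m`
(with the convention that `x = y` always satisfies the congruence). -/
def pcong (p m : ℕ) (x y : ℚ) : Prop := x = y ∨ (m : ℤ) ≤ padicValRat p (x - y)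

/-- Double harmonic sum `H_n(a,b) = ∑_{0<i<j≤n} 1/(i^a j^b)`. -/
def H2s (n a b : ℕ) : ℚ := ∑ j ∈ Finset.Icc 1 n, ∑ i ∈ Finset.Ico 1 j, 1 / ((i : ℚ) ^ a * (j : ℚ) ^ b)

/-- Odd double harmonic sum `\overline{H}_n(a,b) = ∑_{0≤i<j<n} 1/((2i+1)^a (2j+1)^b)`. -/
def oH2 (n a b : ℕ) : ℚ :=
  ∑ j ∈ Finset.range n, ∑ i ∈ Finset.range j,
    1 / ((2 * (i : ℚ) + 1) ^ a * (2 * (j : ℚ) + 1) ^ b)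

/-! With `n = (p - 1) / 2`, the reflection `k ↦ n - k` turns the odd numbers `2k + 1 < p` into
`p - 2a` with `1 ≤ a ≤ n`, so `\overline{H}_n(r,s)` becomes `∑_{1 ≤ a < b ≤ n} 1/((p - 2a)^s (p - 2b)^r)`.
Expanding `(p - 2a)^{-s} = (-2a)^{-s} (1 - p/(2a))^{-s}` to second order in `p` gives the right-hand
side term by term, and the error is divisible by `p³` because `2a` and `2b` are prime to `p`. -/

open Finset

section Congruence

variable {p : ℕ} [Fact p.Prime] {m : ℕ}

lemma pcong_iff_padicNorm_le {x y : ℚ} :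
    pcong p m x y ↔ padicNorm p (x - y) ≤ (p : ℚ) ^ (-(m : ℤ)) := by
  rcases eq_or_ne x y with rfl | hxy
  · simp [pcong]
  · rw [padicNorm.eq_zpow_of_nonzero (sub_ne_zero.mpr hxy),
      zpow_le_zpow_iff_right₀ (mod_cast (Fact.out : p.Prime).one_lt)]
    simp [pcong, hxy]

lemma pcong_sum {ι : Type*} (t : Finset ι) {f g : ι → ℚ}
    (h : ∀ i ∈ t, pcong p m (f i) (g i)) : pcong p m (∑ i ∈ t, f i) (∑ i ∈ t, g i) := by
  simp only [pcong_iff_padicNorm_le, ← sum_sub_distrib] at h ⊢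
  exact padicNorm.sum_le' h (by positivity)

lemma pcong_intCast_div {N₁ D₁ N₂ D₂ : ℤ} (hD₁ : ¬ (p : ℤ) ∣ D₁) (hD₂ : ¬ (p : ℤ) ∣ D₂)
    (h : N₁ * D₂ ≡ N₂ * D₁ [ZMOD p ^ m]) : pcong p m (N₁ / D₁) (N₂ / D₂) := by
  have hD₁0 : (D₁ : ℚ) ≠ 0 := mod_cast fun h => hD₁ (h ▸ dvd_zero _)
  have hD₂0 : (D₂ : ℚ) ≠ 0 := mod_cast fun h => hD₂ (h ▸ dvd_zero _)
  have hdvd : ((p ^ m : ℕ) : ℤ) ∣ N₁ * D₂ - D₁ * N₂ := by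
    rw [mul_comm D₁]; exact_mod_cast h.symm.dvd
  rw [pcong_iff_padicNorm_le, div_sub_div _ _ hD₁0 hD₂0, padicNorm.div, padicNorm.mul,
    (padicNorm.int_eq_one_iff _).mpr hD₁, (padicNorm.int_eq_one_iff _).mpr hD₂, mul_one, div_one]
  exact_mod_cast padicNorm.dvd_iff_norm_le.mp hdvd

end Congruence

section CubeExpansion

variable (u ε : ℤ)

/-- Cleared-denominator form of `(u + ε)⁻ᵐ ≡ u⁻ᵐ (1 - m ε/u + C(m+1,2) ε²/u²) mod ε³`. -/
lemma add_pow_mul_quadratic_modEq (m : ℕ) :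
    (u + ε) ^ m * (u ^ 2 - m * u * ε + (m + 1).choose 2 * ε ^ 2) ≡ u ^ (m + 2) [ZMOD ε ^ 3] := by
  induction m with
  | zero => simp
  | succ m ih =>
    have hchoose : ((m + 2).choose 2 : ℤ) = (m + 1).choose 2 + (m + 1) := by
      rw [Nat.choose_succ_succ (m + 1) 1]
      push_cast [Nat.choose_one_right]
      ring
    calc (u + ε) ^ (m + 1) * (u ^ 2 - (m + 1 : ℕ) * u * ε + (m + 1 + 1).choose 2 * ε ^ 2)
        = u * ((u + ε) ^ m * (u ^ 2 - m * u * ε + (m + 1).choose 2 * ε ^ 2))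
          + ε ^ 3 * ((u + ε) ^ m * (m + 2).choose 2) := by
          rw [hchoose]; push_cast; ring
      _ ≡ u * u ^ (m + 2) [ZMOD ε ^ 3] := by
          simpa using ih.mul_left u
      _ = u ^ (m + 1 + 2) := by ring

lemma add_pow_mul_add_pow_mul_modEq (v : ℤ) (s r : ℕ) :
    (u + ε) ^ s * (v + ε) ^ r * (u ^ 2 * v ^ 2 - ε * (s * u * v ^ 2 + r * u ^ 2 * v)
      + ε ^ 2 * ((s + 1).choose 2 * v ^ 2 + s * r * u * v + (r + 1).choose 2 * u ^ 2))
      ≡ u ^ (s + 2) * v ^ (r + 2) [ZMOD ε ^ 3] := by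
  set Cs : ℤ := ↑((s + 1).choose 2)
  set Cr : ℤ := ↑((r + 1).choose 2)
  calc _ = (u + ε) ^ s * (u ^ 2 - s * u * ε + Cs * ε ^ 2)
          * ((v + ε) ^ r * (v ^ 2 - r * v * ε + Cr * ε ^ 2))
        + ε ^ 3 * ((u + ε) ^ s * (v + ε) ^ r * (s * u * Cr + r * v * Cs - ε * Cs * Cr)) := by ring
    _ ≡ u ^ (s + 2) * v ^ (r + 2) [ZMOD ε ^ 3] := by
        simpa using (add_pow_mul_quadratic_modEq u ε s).mul (add_pow_mul_quadratic_modEq v ε r)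

end CubeExpansion

lemma pcong_one_div_sub_pow_mul_sub_pow {p : ℕ} [Fact p.Prime] {a b : ℕ} (ha : ¬ p ∣ 2 * a)
    (hb : ¬ p ∣ 2 * b) (r s : ℕ) :
    pcong p 3 (1 / (((p : ℚ) - 2 * a) ^ s * ((p : ℚ) - 2 * b) ^ r))
      ((1 / (-2 : ℚ) ^ (r + s)) * (1 / ((a : ℚ) ^ s * (b : ℚ) ^ r)
        + ((p : ℚ) / 2) * (r * (1 / ((a : ℚ) ^ s * (b : ℚ) ^ (r + 1)))
          + s * (1 / ((a : ℚ) ^ (s + 1) * (b : ℚ) ^ r)))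
        + ((p : ℚ) ^ 2 / 4) * (((r + 1).choose 2 : ℚ) * (1 / ((a : ℚ) ^ s * (b : ℚ) ^ (r + 2)))
          + r * s * (1 / ((a : ℚ) ^ (s + 1) * (b : ℚ) ^ (r + 1)))
          + ((s + 1).choose 2 : ℚ) * (1 / ((a : ℚ) ^ (s + 2) * (b : ℚ) ^ r))))) := by
  have hpZ : Prime (p : ℤ) := Nat.prime_iff_prime_int.mp Fact.out
  set u : ℤ := -(2 * a)
  set v : ℤ := -(2 * b)
  have hu : ¬ (p : ℤ) ∣ u := by simpa [u, Int.dvd_neg] using mod_cast ha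
  have hv : ¬ (p : ℤ) ∣ v := by simpa [v, Int.dvd_neg] using mod_cast hb
  have hu' : ¬ (p : ℤ) ∣ u + p := by rwa [dvd_add_self_right]
  have hv' : ¬ (p : ℤ) ∣ v + p := by rwa [dvd_add_self_right]
  have hnd : ∀ {x y : ℤ}, ¬ (p : ℤ) ∣ x → ¬ (p : ℤ) ∣ y → ∀ i j : ℕ, ¬ (p : ℤ) ∣ x ^ i * y ^ j :=
    fun hx hy i j => hpZ.not_dvd_mul (hx ∘ hpZ.dvd_of_dvd_pow) (hy ∘ hpZ.dvd_of_dvd_pow)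
  have ha0 : (a : ℚ) ≠ 0 := Nat.cast_ne_zero.mpr (by rintro rfl; simp at ha)
  have hb0 : (b : ℚ) ≠ 0 := Nat.cast_ne_zero.mpr (by rintro rfl; simp at hb)
  have hlhs : 1 / (((p : ℚ) - 2 * a) ^ s * ((p : ℚ) - 2 * b) ^ r)
      = ((1 : ℤ) : ℚ) / (((u + p) ^ s * (v + p) ^ r : ℤ) : ℚ) := by
    push_cast [u, v]; ring
  have key := (add_pow_mul_add_pow_mul_modEq u p v s r).symm
  rw [← one_mul (u ^ (s + 2) * v ^ (r + 2)), mul_comm ((u + (p : ℤ)) ^ s * (v + p) ^ r)] at key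
  rw [hlhs]
  convert pcong_intCast_div (hnd hu' hv' s r) (hnd hu hv (s + 2) (r + 2)) key using 2
  push_cast [u, v]
  field_simp
  ring

lemma oH2_eq_sum_reflect (n r s : ℕ) :
    oH2 n r s = ∑ b ∈ Icc 1 n, ∑ a ∈ Ico 1 b,
      1 / ((2 * (n : ℚ) + 1 - 2 * a) ^ s * (2 * (n : ℚ) + 1 - 2 * b) ^ r) := by
  rw [oH2, sum_sigma', sum_sigma']
  refine sum_nbij' (fun x => ⟨n - x.2, n - x.1⟩) (fun y => ⟨n - y.2, n - y.1⟩) ?_ ?_ ?_ ?_ ?_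
  all_goals
    rintro ⟨j, i⟩ h
    simp only [mem_sigma, mem_range, mem_Icc, mem_Ico] at h
  · simp only [mem_sigma, mem_Icc, mem_Ico]
    omega
  · simp only [mem_sigma, mem_range]
    omega
  · exact Sigma.ext (by dsimp only; omega) (heq_of_eq (by dsimp only; omega))
  · exact Sigma.ext (by dsimp only; omega) (heq_of_eq (by dsimp only; omega))
  · dsimp only
    rw [Nat.cast_sub (by omega), Nat.cast_sub (by omega)]
    ring

theorem stmt7_general (p : ℕ) (hp : p.Prime) (hodd : Odd p) (r s : ℕ) :
    pcong p 3 (oH2 ((p - 1) / 2) r s)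
      ((1 / (-2 : ℚ) ^ (r + s)) *
        (H2s ((p - 1) / 2) s r
          + ((p : ℚ) / 2) * (r * H2s ((p - 1) / 2) s (r + 1) + s * H2s ((p - 1) / 2) (s + 1) r)
          + ((p : ℚ) ^ 2 / 4) * ((Nat.choose (r + 1) 2 : ℚ) * H2s ((p - 1) / 2) s (r + 2)
              + r * s * H2s ((p - 1) / 2) (s + 1) (r + 1)
              + (Nat.choose (s + 1) 2 : ℚ) * H2s ((p - 1) / 2) (s + 2) r))) := by
  have := Fact.mk hp
  set n := (p - 1) / 2
  have hpn : p = 2 * n + 1 := by obtain ⟨k, rfl⟩ := hodd; omega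
  have hndvd : ∀ k, 1 ≤ k → k ≤ n → ¬ p ∣ 2 * k :=
    fun k hk hkn => Nat.not_dvd_of_pos_of_lt (by omega) (by omega)
  rw [oH2_eq_sum_reflect, show 2 * (n : ℚ) + 1 = p by exact_mod_cast hpn.symm]
  simp only [H2s, mul_sum, ← sum_add_distrib]
  refine pcong_sum _ fun b hb => pcong_sum _ fun a ha => ?_
  rw [mem_Icc] at hb
  rw [mem_Ico] at ha
  exact pcong_one_div_sub_pow_mul_sub_pow (hndvd a ha.1 (by omega)) (hndvd b hb.1 hb.2) r s

theorem stmt7 (p : ℕ) (hp : p.Prime) (hodd : Odd p) (r s : ℕ) (hr : 1 ≤ r) (hs : 1 ≤ s) :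
    pcong p 3 (oH2 ((p - 1) / 2) r s)
      ((1 / (-2 : ℚ) ^ (r + s)) *
        (H2s ((p - 1) / 2) s r
          + ((p : ℚ) / 2) * (r * H2s ((p - 1) / 2) s (r + 1) + s * H2s ((p - 1) / 2) (s + 1) r)
          + ((p : ℚ) ^ 2 / 4) * ((Nat.choose (r + 1) 2 : ℚ) * H2s ((p - 1) / 2) s (r + 2)
              + r * s * H2s ((p - 1) / 2) (s + 1) (r + 1)
              + (Nat.choose (s + 1) 2 : ℚ) * H2s ((p - 1) / 2) (s + 2) r))) :=
  stmt7_general p hp hodd r s
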